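/- For the Lie algebra of type (hc5) with brackets [e₁,e₂]=e₂, [e₁,e₃]=(1/2)e₃, [e₁,e₄]=(1/2)e₄, [e₃,e₄]=(1/2)e₂, the standard hypercomplex structure and metric g(x,y)=x¹y¹+x²y²-x³y³-x⁴y⁴, the only nonzero Lee form components are θ₁(e₂) = -1/2, θ₂(e₃) = 3, θ₃(e₄) = -3. -/

import Mathlib

noncomputable section

/-- The underlying 4-dimensional real vector space. -/
abbrev V : Type := Fin 4 → ℝ

/-- The standard basis of ℝ⁴. -/
def e : Fin 4 → V := fun i => Pi.single i 1

/-- The neutral metric g(x,y) = x¹y¹ + x²y² - x³y³ - x⁴y⁴. -/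
def g (x y : V) : ℝ := x 0 * y 0 + x 1 * y 1 - x 2 * y 2 - x 3 * y 3

/-- J₁ of the standard hypercomplex structure. -/
def J1 (x : V) : V := ![-x 1, x 0, x 3, -x 2]

/-- J₂ of the standard hypercomplex structure. -/
def J2 (x : V) : V := ![-x 2, -x 3, x 0, x 1]

/-- J₃ of the standard hypercomplex structure. -/
def J3 (x : V) : V := ![x 3, -x 2, x 1, -x 0]

/-- The bracket of type (hc5): [e₁,e₂]=e₂, [e₁,e₃]=(1/2)e₃, [e₁,e₄]=(1/2)e₄,
[e₃,e₄]=(1/2)e₂. -/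
def br (x y : V) : V :=
  ![0, x 0 * y 1 - x 1 * y 0 + (1/2) * (x 2 * y 3 - x 3 * y 2),
    (1/2) * (x 0 * y 2 - x 2 * y 0), (1/2) * (x 0 * y 3 - x 3 * y 0)]


/-- Structure tensor F(x,y,z) = g((∇ₓJ)y, z) = g(∇ₓ(Jy) - J(∇ₓy), z). -/
def F (J : V → V) (nabla : V → V → V) (x y z : V) : ℝ :=
  g (nabla x (J y) - J (nabla x y)) z

/-- Lee form θ(z) = Σᵢ gⁱⁱ F(eᵢ,eᵢ,z) with gⁱⁱ = (1,1,-1,-1). -/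
def theta (J : V → V) (nabla : V → V → V) (z : V) : ℝ :=
  F J nabla (e 0) (e 0) z + F J nabla (e 1) (e 1) z
    - F J nabla (e 2) (e 2) z - F J nabla (e 3) (e 3) z

/-! Since `g` is nondegenerate, the Koszul formula determines `∇` uniquely; pairing it with each
basis vector solves for `∇` explicitly, and the Lee forms of that bilinear map are a direct
coordinate computation. -/

lemma e_apply (i j : Fin 4) : e i j = if i = j then 1 else 0 := by
  simp only [e, Pi.single_apply, eq_comm]

lemma g_apply_e (x : V) (i : Fin 4) : g x (e i) = (if i.val < 2 then 1 else -1) * x i := by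
  fin_cases i <;> simp [g, e]

lemma g_left_injective {x y : V} (h : ∀ z, g x z = g y z) : x = y := by
  funext i
  have hi := h (e i)
  rw [g_apply_e, g_apply_e] at hi
  split_ifs at hi <;> linarith

lemma koszul_unique (B : V → V → V) {nabla nabla' : V → V → V}
    (h : ∀ x y z, 2 * g (nabla x y) z = g (B x y) z + g (B z x) y + g (B z y) x)
    (h' : ∀ x y z, 2 * g (nabla' x y) z = g (B x y) z + g (B z x) y + g (B z y) x) :
    nabla = nabla' := by
  funext x y
  exact g_left_injective fun z => by linarith [h x y z, h' x y z]

def leviCivita (x y : V) : V :=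
  ![x 1 * y 1 - (1/2) * (x 2 * y 2) - (1/2) * (x 3 * y 3),
    -(x 1 * y 0) + (1/4) * (x 2 * y 3) - (1/4) * (x 3 * y 2),
    -(1/4) * (x 1 * y 3) - (1/2) * (x 2 * y 0) - (1/4) * (x 3 * y 1),
    (1/4) * (x 1 * y 2) + (1/4) * (x 2 * y 1) - (1/2) * (x 3 * y 0)]

lemma leviCivita_koszul (x y z : V) :
    2 * g (leviCivita x y) z = g (br x y) z + g (br z x) y + g (br z y) x := by
  simp only [g, br, leviCivita, Matrix.cons_val]
  ring

lemma theta_J1_leviCivita (z : V) : theta J1 leviCivita z = -(1/2) * z 1 := by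
  simp only [theta, F, g, leviCivita, J1, e_apply, Pi.sub_apply, Matrix.cons_val,
    Fin.reduceEq, ↓reduceIte]
  ring

lemma theta_J2_leviCivita (z : V) : theta J2 leviCivita z = 3 * z 2 := by
  simp only [theta, F, g, leviCivita, J2, e_apply, Pi.sub_apply, Matrix.cons_val,
    Fin.reduceEq, ↓reduceIte]
  ring

lemma theta_J3_leviCivita (z : V) : theta J3 leviCivita z = -3 * z 3 := by
  simp only [theta, F, g, leviCivita, J3, e_apply, Pi.sub_apply, Matrix.cons_val,
    Fin.reduceEq, ↓reduceIte]
  ring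

/-- Lee forms of the (hc5) structure: θ₁(e₂)=-1/2, θ₂(e₃)=3, θ₃(e₄)=-3 are the
only nonzero components. -/
theorem hc5_lee_forms (nabla : V → V → V)
    (hK : ∀ x y z : V,
      2 * g (nabla x y) z = g (br x y) z + g (br z x) y + g (br z y) x) :
    (∀ i : Fin 4, theta J1 nabla (e i) = if i = 1 then -1/2 else 0) ∧
    (∀ i : Fin 4, theta J2 nabla (e i) = if i = 2 then 3 else 0) ∧
    (∀ i : Fin 4, theta J3 nabla (e i) = if i = 3 then -3 else 0) := by
  obtain rfl : nabla = leviCivita := koszul_unique br hK leviCivita_koszul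
  refine ⟨fun i => ?_, fun i => ?_, fun i => ?_⟩
  · rw [theta_J1_leviCivita, e_apply]
    split_ifs <;> norm_num
  · rw [theta_J2_leviCivita, e_apply]
    split_ifs <;> norm_num
  · rw [theta_J3_leviCivita, e_apply]
    split_ifs <;> norm_num
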